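/- Let (X,d,μ) be a quasi-metric-measure space and c ∈ (1,∞). Then (X,d) is totally bounded if and only if (X,d) is bounded and μ is (c,δ)-doubling for every δ ∈ (0, diam_d(X)]. -/

import Mathlib

/-! Write `K = C_d C̃_d`: if `x ∈ B(y, r)` then `B(y, r) ⊆ B(x, K r)`, and balls of radius `r`
around points at distance `≥ K r` are disjoint.
A finite `r`-net bounds the space, hence `μ X < ∞`, and the smallest of its finitely many balls
bounds `μ(B(x, K r))` from below uniformly in `x`. A uniform positive lower bound `m` on ball
measures at scale `δ` already gives `(c,δ)`-doubling with constant `μ X / m`.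
Conversely, doubling at the scales `c^j s ≤ diam X` (and trivially above `diam X`, where every
ball is `X`) gives `μ X ≤ P μ(B(x, s))` uniformly in `x`. Without a finite `r`-net there is an
infinite `r`-separated sequence, whose balls of radius `r / K` are disjoint and all of measure
at least `μ X / P > 0`, contradicting `μ X < ∞`. -/

open Set MeasureTheory Topology
open scoped ENNReal NNReal

variable {X : Type*}

/-- The ball with respect to a quasi-metric `d`. -/
def qball (d : X → X → ℝ) (x : X) (r : ℝ) : Set X := {y | d x y < r}

/-- The topology induced by a quasi-metric: a set is open iff every one of its
points admits a ball contained in the set. -/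
def quasiMetricTopology (d : X → X → ℝ) : TopologicalSpace X where
  IsOpen O := ∀ x ∈ O, ∃ r > 0, qball d x r ⊆ O
  isOpen_univ := fun _ _ => ⟨1, one_pos, fun _ _ => trivial⟩
  isOpen_inter := by
    intro O₁ O₂ h₁ h₂ x hx
    obtain ⟨r₁, hr₁, hs₁⟩ := h₁ x hx.1
    obtain ⟨r₂, hr₂, hs₂⟩ := h₂ x hx.2
    refine ⟨min r₁ r₂, lt_min hr₁ hr₂, fun y hy => ⟨hs₁ ?_, hs₂ ?_⟩⟩
    · exact lt_of_lt_of_le (show d x y < min r₁ r₂ from hy) (min_le_left _ _)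
    · exact lt_of_lt_of_le (show d x y < min r₁ r₂ from hy) (min_le_right _ _)
  isOpen_sUnion := by
    intro S hS x hx
    obtain ⟨O, hO, hxO⟩ := hx
    obtain ⟨r, hr, hsub⟩ := hS O hO x hxO
    exact ⟨r, hr, fun y hy => ⟨O, hO, hsub hy⟩⟩

/-- `μ` is `(c,δ)`-doubling w.r.t. `d` : `μ(B(x,cδ)) ≤ C(δ)·μ(B(x,δ))` for
all `x`, for some constant `C(δ) ∈ [1,∞)`. -/
def CDeltaDoubling [MeasurableSpace X] (d : X → X → ℝ) (μ : MeasureTheory.Measure X)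
    (c δ : ℝ) : Prop :=
  ∃ C : ℝ, 1 ≤ C ∧ ∀ x : X, μ (qball d x (c * δ)) ≤ ENNReal.ofReal C * μ (qball d x δ)

/-- The (extended-real-valued) diameter of a quasi-metric space. -/
noncomputable def qdiam (d : X → X → ℝ) : ℝ≥0∞ :=
  ⨆ (x : X) (y : X), ENNReal.ofReal (d x y)

section

variable {d : X → X → ℝ} {Csym Cd r B : ℝ} {x y : X}

theorem qball_subset_qball_of_mem (hsym : ∀ x y, d y x ≤ Csym * d x y) (hCsym : 1 ≤ Csym)
    (htri : ∀ x y z, d x y ≤ Cd * max (d x z) (d z y)) (hCd : 0 < Cd) (hr : 0 ≤ r)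
    (hx : x ∈ qball d y r) : qball d y r ⊆ qball d x (Cd * Csym * r) := by
  intro z (hz : d y z < r)
  have hxy : d x y < Csym * r :=
    (hsym y x).trans_lt (mul_lt_mul_of_pos_left hx (by linarith))
  have hyz : d y z < Csym * r := hz.trans_le (le_mul_of_one_le_left hr hCsym)
  show d x z < Cd * Csym * r
  calc d x z ≤ Cd * max (d x y) (d y z) := htri x z y
    _ < Cd * (Csym * r) := mul_lt_mul_of_pos_left (max_lt hxy hyz) hCd
    _ = Cd * Csym * r := (mul_assoc _ _ _).symm

theorem disjoint_qball_of_le (hsym : ∀ x y, d y x ≤ Csym * d x y) (hCsym : 1 ≤ Csym)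
    (htri : ∀ x y z, d x y ≤ Cd * max (d x z) (d z y)) (hCd : 0 < Cd) (hr : 0 ≤ r)
    (h : Cd * Csym * r ≤ d x y) : Disjoint (qball d x r) (qball d y r) := by
  refine disjoint_left.mpr fun z (hxz : d x z < r) (hyz : d y z < r) => h.not_gt ?_
  have hzy : d z y < Csym * r :=
    (hsym y z).trans_lt (mul_lt_mul_of_pos_left hyz (by linarith))
  have hxz' : d x z < Csym * r := hxz.trans_le (le_mul_of_one_le_left hr hCsym)
  calc d x y ≤ Cd * max (d x z) (d z y) := htri x y z
    _ < Cd * (Csym * r) := mul_lt_mul_of_pos_left (max_lt hxz' hzy) hCd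
    _ = Cd * Csym * r := (mul_assoc _ _ _).symm

theorem exists_bound_of_finite_cover (hsym : ∀ x y, d y x ≤ Csym * d x y) (hCsym : 0 ≤ Csym)
    (htri : ∀ x y z, d x y ≤ Cd * max (d x z) (d z y)) (hCd : 0 ≤ Cd) {T : Set X}
    (hT : T.Finite) (hcover : univ ⊆ ⋃ y ∈ T, qball d y r) : ∃ B, ∀ x y, d x y ≤ B := by
  obtain ⟨M, hM⟩ := (hT.image2 d hT).bddAbove
  refine ⟨Cd * max (Csym * r) (Cd * max M r), fun x y => ?_⟩
  obtain ⟨a, ha, hax⟩ := mem_iUnion₂.mp (hcover (mem_univ x))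
  obtain ⟨b, hb, hby⟩ := mem_iUnion₂.mp (hcover (mem_univ y))
  have hxa : d x a ≤ Csym * r := (hsym a x).trans (by gcongr; exact le_of_lt hax)
  have hay : d a y ≤ Cd * max M r := (htri a y b).trans <| by
    gcongr
    exacts [hM (mem_image2_of_mem ha hb), le_of_lt hby]
  calc d x y ≤ Cd * max (d x a) (d a y) := htri x y a
    _ ≤ Cd * max (Csym * r) (Cd * max M r) := by gcongr

theorem qdiam_lt_top_of_bound (hB : ∀ x y, d x y ≤ B) : qdiam d < ⊤ :=
  (iSup₂_le fun x y => ENNReal.ofReal_le_ofReal (hB x y)).trans_lt ENNReal.ofReal_lt_top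

theorem le_toReal_qdiam (h : qdiam d ≠ ⊤) (x y : X) : d x y ≤ (qdiam d).toReal :=
  (ENNReal.ofReal_le_iff_le_toReal h).mp (le_iSup₂ (f := fun x y => ENNReal.ofReal (d x y)) x y)

theorem qball_eq_univ_of_bound (hB : ∀ x y, d x y ≤ B) (hr : B < r) (x : X) :
    qball d x r = univ :=
  eq_univ_of_forall fun y => (hB x y).trans_lt hr

section Measure

variable [MeasurableSpace X] {μ : Measure X}

theorem measure_univ_lt_top_of_bound (hB : ∀ x y, d x y ≤ B)
    (hfin : ∀ x r, 0 < r → μ (qball d x r) < ⊤) : μ univ < ⊤ := by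
  rcases isEmpty_or_nonempty X with hX | ⟨⟨x⟩⟩
  · simp
  rw [← qball_eq_univ_of_bound hB (lt_max_of_lt_left (lt_add_one B)) x]
  exact hfin x _ (lt_max_of_lt_right one_pos)

theorem iInf_measure_qball_pos_of_finite_cover (hsym : ∀ x y, d y x ≤ Csym * d x y)
    (hCsym : 1 ≤ Csym) (htri : ∀ x y z, d x y ≤ Cd * max (d x z) (d z y)) (hCd : 0 < Cd)
    (hr : 0 < r) (hpos : ∀ x, 0 < μ (qball d x r)) {T : Set X} (hT : T.Finite)
    (hcover : univ ⊆ ⋃ y ∈ T, qball d y r) : 0 < ⨅ x, μ (qball d x (Cd * Csym * r)) := by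
  rcases T.eq_empty_or_nonempty with rfl | hne
  · have : IsEmpty X := by simpa [univ_eq_empty_iff] using hcover
    simp [iInf_of_empty]
  obtain ⟨y₀, -, hmin⟩ := exists_min_image T (fun y => μ (qball d y r)) hT hne
  refine (hpos y₀).trans_le (le_iInf fun x => ?_)
  obtain ⟨y, hy, hxy⟩ := mem_iUnion₂.mp (hcover (mem_univ x))
  exact (hmin y hy).trans <|
    measure_mono (qball_subset_qball_of_mem hsym hCsym htri hCd hr.le hxy)

theorem cdeltaDoubling_of_iInf_measure_qball_pos (hμ : μ univ ≠ ⊤) {δ : ℝ}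
    (h : 0 < ⨅ x, μ (qball d x δ)) (c : ℝ) : CDeltaDoubling d μ c δ := by
  set m := ⨅ x, μ (qball d x δ)
  have hratio : μ univ / m ≠ ⊤ := ENNReal.div_ne_top hμ h.ne'
  refine ⟨max 1 (μ univ / m).toReal, le_max_left _ _, fun x => ?_⟩
  have hC : μ univ / m ≤ ENNReal.ofReal (max 1 (μ univ / m).toReal) :=
    (ENNReal.le_ofReal_iff_toReal_le hratio (zero_le_one.trans (le_max_left _ _))).mpr
      (le_max_right _ _)
  have hC0 : ENNReal.ofReal (max 1 (μ univ / m).toReal) ≠ 0 := by simp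
  calc μ (qball d x (c * δ)) ≤ μ univ := measure_mono (subset_univ _)
    _ ≤ ENNReal.ofReal (max 1 (μ univ / m).toReal) * m :=
      (ENNReal.div_le_iff_le_mul (.inr ENNReal.ofReal_ne_top) (.inr hC0)).mp hC
    _ ≤ ENNReal.ofReal (max 1 (μ univ / m).toReal) * μ (qball d x δ) := by
      gcongr; exact iInf_le _ x

theorem cdeltaDoubling_of_bound_lt (hB : ∀ x y, d x y ≤ B) {c δ : ℝ} (hc : 1 ≤ c)
    (hδ : 0 ≤ δ) (hBδ : B < δ) : CDeltaDoubling d μ c δ := by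
  refine ⟨1, le_rfl, fun x => ?_⟩
  have hBcδ : B < c * δ := hBδ.trans_le (le_mul_of_one_le_left hδ hc)
  rw [qball_eq_univ_of_bound hB hBδ, qball_eq_univ_of_bound hB hBcδ, ENNReal.ofReal_one, one_mul]

theorem exists_measure_qball_pow_mul_le {c s : ℝ} {k : ℕ}
    (h : ∀ j < k, CDeltaDoubling d μ c (c ^ j * s)) :
    ∃ C ≠ ⊤, ∀ x, μ (qball d x (c ^ k * s)) ≤ C * μ (qball d x s) := by
  induction k with
  | zero => exact ⟨1, ENNReal.one_ne_top, fun x => by simp⟩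
  | succ k ih =>
    obtain ⟨C, hC, hCk⟩ := ih fun j hj => h j (hj.trans k.lt_succ_self)
    obtain ⟨D, -, hD⟩ := h k k.lt_succ_self
    refine ⟨ENNReal.ofReal D * C, ENNReal.mul_ne_top ENNReal.ofReal_ne_top hC, fun x => ?_⟩
    calc μ (qball d x (c ^ (k + 1) * s)) = μ (qball d x (c * (c ^ k * s))) := by ring_nf
      _ ≤ ENNReal.ofReal D * μ (qball d x (c ^ k * s)) := hD x
      _ ≤ ENNReal.ofReal D * C * μ (qball d x s) := by rw [mul_assoc]; gcongr; exact hCk x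

theorem iInf_measure_qball_pos_of_doubling (hB : ∀ x y, d x y ≤ B) {c s : ℝ} (hc : 1 < c)
    (hs : 0 < s) (hdoub : ∀ δ, 0 < δ → δ ≤ B → CDeltaDoubling d μ c δ)
    (hpos : ∀ x r, 0 < r → 0 < μ (qball d x r)) : 0 < ⨅ x, μ (qball d x s) := by
  rcases isEmpty_or_nonempty X with hX | ⟨⟨x₀⟩⟩
  · simp [iInf_of_empty]
  obtain ⟨k, hk⟩ := pow_unbounded_of_one_lt (B / s) hc
  have hBk : B < c ^ k * s := (div_lt_iff₀ hs).mp hk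
  have hpow : ∀ j : ℕ, 0 < c ^ j * s := fun j => mul_pos (pow_pos (one_pos.trans hc) j) hs
  obtain ⟨C, hC, hCk⟩ := exists_measure_qball_pow_mul_le (μ := μ) (k := k) fun j _ =>
    (le_or_gt (c ^ j * s) B).elim (hdoub _ (hpow j))
      (cdeltaDoubling_of_bound_lt hB hc.le (hpow j).le)
  have huniv : ∀ x, μ univ ≤ C * μ (qball d x s) := fun x => by
    simpa only [qball_eq_univ_of_bound hB hBk] using hCk x
  have hμ : 0 < μ univ := by
    simpa only [qball_eq_univ_of_bound hB hBk] using hpos x₀ _ (hpow k)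
  exact (ENNReal.div_pos hμ.ne' hC).trans_le <| le_iInf fun x =>
    ENNReal.div_le_of_le_mul' (huniv x)

theorem exists_finite_cover_of_iInf_measure_qball_pos (hμ : μ univ ≠ ⊤) {s : ℝ}
    (hmeas : ∀ x, MeasurableSet (qball d x s))
    (hdisj : ∀ x y, r ≤ d x y → Disjoint (qball d x s) (qball d y s))
    (h : 0 < ⨅ x, μ (qball d x s)) :
    ∃ T : Set X, T.Finite ∧ univ ⊆ ⋃ y ∈ T, qball d y r := by
  by_contra! hno_cover
  obtain ⟨f, -, hf⟩ := exists_seq_of_forall_finset_exists' (fun _ => True)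
    (fun x y => Disjoint (qball d x s) (qball d y s)) fun F _ => by
      obtain ⟨x, -, hx⟩ := not_subset.mp (hno_cover F F.finite_toSet)
      refine ⟨x, trivial, fun y hy => hdisj y x (not_lt.mp fun hyx => hx ?_)⟩
      exact mem_iUnion₂.mpr ⟨y, hy, hyx⟩
  have hfin := Measure.finite_const_le_meas_of_disjoint_iUnion μ h (fun i => hmeas (f i)) hf
    (ne_top_of_le_ne_top hμ (measure_mono (subset_univ _)))
  exact infinite_univ (hfin.subset fun i _ => iInf_le (fun x => μ (qball d x s)) (f i))

end Measure

end

theorem totallyBounded_iff_bounded_and_cdeltaDoubling_general (d : X → X → ℝ)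
    [m : MeasurableSpace X]
    (Csym : ℝ) (hCsym : 1 ≤ Csym) (hsym : ∀ x y, d y x ≤ Csym * d x y)
    (Cd : ℝ) (hCd : 1 ≤ Cd) (htri : ∀ x y z, d x y ≤ Cd * max (d x z) (d z y))
    (μ : Measure X)
    (hmeasB : ∀ (x : X) (r : ℝ), 0 < r → MeasurableSet (qball d x r))
    (hposB : ∀ (x : X) (r : ℝ), 0 < r → 0 < μ (qball d x r))
    (hfinB : ∀ (x : X) (r : ℝ), 0 < r → μ (qball d x r) < ⊤)
    (c : ℝ) (hc : 1 < c) :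
    (∀ r : ℝ, 0 < r → ∃ T : Set X, T.Finite ∧ Set.univ ⊆ ⋃ y ∈ T, qball d y r) ↔
      (qdiam d < ⊤ ∧
        ∀ δ : ℝ, 0 < δ → ENNReal.ofReal δ ≤ qdiam d → CDeltaDoubling d μ c δ) := by
  have hCd0 : 0 < Cd := one_pos.trans_le hCd
  have hK : 0 < Cd * Csym := by positivity
  have hrescale (r : ℝ) : Cd * Csym * (r / (Cd * Csym)) = r := mul_div_cancel₀ r hK.ne'
  constructor
  · intro htb
    obtain ⟨T, hT, hcover⟩ := htb 1 one_pos
    obtain ⟨B, hB⟩ := exists_bound_of_finite_cover hsym (by linarith) htri hCd0.le hT hcover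
    refine ⟨qdiam_lt_top_of_bound hB, fun δ hδ _ => ?_⟩
    have hr : 0 < δ / (Cd * Csym) := by positivity
    obtain ⟨S, hS, hScover⟩ := htb _ hr
    have hinf := iInf_measure_qball_pos_of_finite_cover hsym hCsym htri hCd0 hr
      (fun x => hposB x _ hr) hS hScover
    rw [hrescale] at hinf
    exact cdeltaDoubling_of_iInf_measure_qball_pos (measure_univ_lt_top_of_bound hB hfinB).ne hinf c
  · rintro ⟨hdiam, hdoub⟩ r hr
    have hB := le_toReal_qdiam hdiam.ne
    have hs : 0 < r / (Cd * Csym) := by positivity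
    refine exists_finite_cover_of_iInf_measure_qball_pos
      (measure_univ_lt_top_of_bound hB hfinB).ne (fun x => hmeasB x _ hs)
      (fun x y hxy => disjoint_qball_of_le hsym hCsym htri hCd0 hs.le (by rwa [hrescale]))
      (iInf_measure_qball_pos_of_doubling hB hc hs
        (fun δ hδ hδB => hdoub δ hδ (ENNReal.ofReal_le_of_le_toReal hδB)) hposB)

/-- for `c > 1`, a quasi-metric-measure space is totally bounded
iff it is bounded and `μ` is `(c,δ)`-doubling for every `δ ∈ (0, diam_d X]`. -/
theorem totallyBounded_iff_bounded_and_cdeltaDoubling (d : X → X → ℝ)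
    [m : MeasurableSpace X]
    (hnn : ∀ x y, 0 ≤ d x y)
    (heq : ∀ x y, d x y = 0 ↔ x = y)
    (Csym : ℝ) (hCsym : 1 ≤ Csym) (hsym : ∀ x y, d y x ≤ Csym * d x y)
    (Cd : ℝ) (hCd : 1 ≤ Cd) (htri : ∀ x y z, d x y ≤ Cd * max (d x z) (d z y))
    (hborel : ∀ s : Set X, IsOpen[quasiMetricTopology d] s → MeasurableSet s)
    (μ : Measure X)
    (hmeasB : ∀ (x : X) (r : ℝ), 0 < r → MeasurableSet (qball d x r))
    (hposB : ∀ (x : X) (r : ℝ), 0 < r → 0 < μ (qball d x r))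
    (hfinB : ∀ (x : X) (r : ℝ), 0 < r → μ (qball d x r) < ⊤)
    (c : ℝ) (hc : 1 < c) :
    (∀ r : ℝ, 0 < r → ∃ T : Set X, T.Finite ∧ Set.univ ⊆ ⋃ y ∈ T, qball d y r) ↔
      (qdiam d < ⊤ ∧
        ∀ δ : ℝ, 0 < δ → ENNReal.ofReal δ ≤ qdiam d → CDeltaDoubling d μ c δ) :=
  totallyBounded_iff_bounded_and_cdeltaDoubling_general d (m := m) Csym hCsym hsym Cd hCd htri μ
    hmeasB hposB hfinB c hc
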